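/- arXiv:2310.17964 — 2 statements merged into one kernel-verified Lean document; each statement's English description precedes it below -/
import Mathlib

section
/- Let α > 0, t > 0, c₀ ∈ (0, 1), and h ∈ ℂ with |h| < c₀ t. Then lim_{ε → 0⁺} (1/π) ∫₀^{ε^{1/3}} [ 1/(ε h + √(α² p² + t² ε²)) + 1/(ε h − √(α² p² + t² ε²)) ] dp = − h / (α √(t² − h²)), where √(t² − h²) denotes the principal branch (which has positive real part since |h| < t). -/
open Complex Filter

/-! With `s = √(α²p² + t²ε²)` and `b = (ε/α)·√(t² − h²)` one has `(εh)² − s² = −α²(p² + b²)`,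
so the integrand is `−(2εh/α²)/(p² + b²)`, with primitive `(−I/2b)(log(b + Ip) − log(b − Ip))`.
Scaling out `X = ε^{1/3}` leaves `(Ih/(α√(t² − h²)))(log(w + I) − log(w − I))` with
`w = b/X = ε^{2/3}√(t² − h²)/α → 0`, and `log I − log(−I) = πI`. -/

namespace Complex

lemma add_ofReal_ne_zero_of_norm_lt {z : ℂ} {r : ℝ} (hz : ‖z‖ < r) : z + r ≠ 0 := fun h0 => by
  rw [eq_neg_of_add_eq_zero_left h0, norm_neg, norm_real, Real.norm_eq_abs] at hz
  exact (le_abs_self r).not_gt hz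

lemma sub_ofReal_ne_zero_of_norm_lt {z : ℂ} {r : ℝ} (hz : ‖z‖ < r) : z - r ≠ 0 := fun h0 => by
  rw [sub_eq_zero.mp h0, norm_real, Real.norm_eq_abs] at hz
  exact (le_abs_self r).not_gt hz

lemma sq_cpow_one_half (z : ℂ) : (z ^ (1 / 2 : ℂ)) ^ 2 = z := by
  simpa only [one_div] using cpow_ofNat_inv_pow z 2

lemma re_cpow_one_half_pos {z : ℂ} (hz : 0 < z.re) : 0 < (z ^ (1 / 2 : ℂ)).re := by
  have hz0 : z ≠ 0 := fun h0 => by simp [h0] at hz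
  have harg := abs_lt.mp (abs_arg_lt_pi_div_two_iff.mpr (Or.inl hz))
  rw [cpow_def_of_ne_zero hz0, exp_re]
  refine mul_pos (Real.exp_pos _) (Real.cos_pos_of_mem_Ioo ⟨?_, ?_⟩) <;>
    simp [log_im] <;> linarith

lemma add_I_mul_ofReal_mem_slitPlane {b : ℂ} (hb : 0 < b.re) (x : ℝ) :
    b + I * x ∈ slitPlane :=
  mem_slitPlane_iff.mpr (Or.inl (by simpa using hb))

lemma sub_I_mul_ofReal_mem_slitPlane {b : ℂ} (hb : 0 < b.re) (x : ℝ) :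
    b - I * x ∈ slitPlane :=
  mem_slitPlane_iff.mpr (Or.inl (by simpa using hb))

lemma sq_add_sq_eq_mul_I (x b : ℂ) : x ^ 2 + b ^ 2 = (b + I * x) * (b - I * x) := by
  linear_combination x ^ 2 * I_sq

lemma ofReal_sq_add_sq_ne_zero {b : ℂ} (hb : 0 < b.re) (x : ℝ) : (x : ℂ) ^ 2 + b ^ 2 ≠ 0 := by
  rw [sq_add_sq_eq_mul_I]
  exact mul_ne_zero (slitPlane_ne_zero (add_I_mul_ofReal_mem_slitPlane hb x))
    (slitPlane_ne_zero (sub_I_mul_ofReal_mem_slitPlane hb x))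

lemma hasDerivAt_log_add_I_mul_sub_log_sub_I_mul {b : ℂ} (hb : 0 < b.re) (x : ℝ) :
    HasDerivAt (fun q : ℝ => -I / (2 * b) * (log (b + I * q) - log (b - I * q)))
      (1 / ((x : ℂ) ^ 2 + b ^ 2)) x := by
  have hb0 : b ≠ 0 := fun h0 => by simp [h0] at hb
  have hplus := slitPlane_ne_zero (add_I_mul_ofReal_mem_slitPlane hb x)
  have hminus := slitPlane_ne_zero (sub_I_mul_ofReal_mem_slitPlane hb x)
  have hx : HasDerivAt (fun q : ℝ => (q : ℂ)) 1 x := (hasDerivAt_id x).ofReal_comp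
  have hlog_plus := (((hx.const_mul I).const_add b).clog_real
    (add_I_mul_ofReal_mem_slitPlane hb x))
  have hlog_minus := (((hx.const_mul I).const_sub b).clog_real
    (sub_I_mul_ofReal_mem_slitPlane hb x))
  refine ((hlog_plus.sub hlog_minus).const_mul _).congr_deriv ?_
  rw [sq_add_sq_eq_mul_I]
  field_simp
  linear_combination (-2 * b) * I_sq

lemma integral_one_div_sq_add_sq {b : ℂ} (hb : 0 < b.re) (X : ℝ) :
    ∫ p in (0 : ℝ)..X, 1 / ((p : ℂ) ^ 2 + b ^ 2)
      = -I / (2 * b) * (log (b + I * X) - log (b - I * X)) := by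
  have hcont : Continuous fun p : ℝ => 1 / ((p : ℂ) ^ 2 + b ^ 2) :=
    continuous_const.div (by fun_prop) (ofReal_sq_add_sq_ne_zero hb)
  rw [intervalIntegral.integral_eq_sub_of_hasDerivAt
    (fun p _ => hasDerivAt_log_add_I_mul_sub_log_sub_I_mul hb p)
    (hcont.intervalIntegrable _ _)]
  simp

lemma log_mul_add_I_sub_log_mul_sub_I {X : ℝ} (hX : 0 < X) {w : ℂ} (hw : 0 < w.re) :
    log (X * w + I * X) - log (X * w - I * X) = log (w + I) - log (w - I) := by
  have hplus : w + I ≠ 0 := by simpa using slitPlane_ne_zero (add_I_mul_ofReal_mem_slitPlane hw 1)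
  have hminus : w - I ≠ 0 := by simpa using slitPlane_ne_zero (sub_I_mul_ofReal_mem_slitPlane hw 1)
  rw [show (X : ℂ) * w + I * X = X * (w + I) by ring,
    show (X : ℂ) * w - I * X = X * (w - I) by ring,
    log_ofReal_mul hX hplus, log_ofReal_mul hX hminus]
  ring

lemma tendsto_log_add_I_sub_log_sub_I :
    Tendsto (fun w : ℂ => log (w + I) - log (w - I)) (nhds 0) (nhds (Real.pi * I)) := by
  have hcont : ContinuousAt (fun w : ℂ => log (w + I) - log (w - I)) 0 :=
    ((continuousAt_clog (by simp [mem_slitPlane_iff])).comp (by fun_prop)).sub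
      ((continuousAt_clog (by simp [mem_slitPlane_iff])).comp (by fun_prop))
  convert hcont.tendsto using 2
  simp only [zero_add, zero_sub, log_I, log_neg_I]
  ring

lemma one_div_add_add_one_div_sub {a s k q b : ℂ} (hplus : a + s ≠ 0) (hminus : a - s ≠ 0)
    (hs : s ^ 2 = a ^ 2 + k ^ 2 * (q ^ 2 + b ^ 2)) :
    1 / (a + s) + 1 / (a - s) = -(2 * a / k ^ 2) * (1 / (q ^ 2 + b ^ 2)) := by
  have hprod : (a + s) * (a - s) = -k ^ 2 * (q ^ 2 + b ^ 2) := by linear_combination -hs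
  have hk : k ≠ 0 := by rintro rfl; simp [mul_ne_zero hplus hminus] at hprod
  have hqb : q ^ 2 + b ^ 2 ≠ 0 := fun h0 => by simp [h0, mul_ne_zero hplus hminus] at hprod
  rw [one_div_add_one_div hplus hminus, hprod]
  field_simp
  ring

end Complex

lemma norm_ofReal_mul_lt_sqrt {α t ε : ℝ} (hε : 0 < ε) {h : ℂ} (hh : ‖h‖ < t) (p : ℝ) :
    ‖(ε : ℂ) * h‖ < √(α ^ 2 * p ^ 2 + t ^ 2 * ε ^ 2) := by
  rw [norm_mul, norm_real, Real.norm_of_nonneg hε.le]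
  refine Real.lt_sqrt_of_sq_lt ?_
  have : (ε * ‖h‖) ^ 2 < (ε * t) ^ 2 := by gcongr
  nlinarith [sq_nonneg (α * p)]

lemma integral_one_div_add_sqrt_add_one_div_sub_sqrt {α t ε : ℝ} (hα : 0 < α) (hε : 0 < ε)
    {h c : ℂ} (hh : ‖h‖ < t) (hc2 : c ^ 2 = t ^ 2 - h ^ 2) (hc : 0 < c.re) :
    ∫ p in (0 : ℝ)..ε ^ ((1 : ℝ) / 3),
        (1 / ((ε : ℂ) * h + (√(α ^ 2 * p ^ 2 + t ^ 2 * ε ^ 2) : ℂ)) +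
         1 / ((ε : ℂ) * h - (√(α ^ 2 * p ^ 2 + t ^ 2 * ε ^ 2) : ℂ)))
      = I * h / (α * c) * (log (((ε ^ ((2 : ℝ) / 3) / α : ℝ) : ℂ) * c + I)
          - log (((ε ^ ((2 : ℝ) / 3) / α : ℝ) : ℂ) * c - I)) := by
  have hα0 : (α : ℂ) ≠ 0 := ofReal_ne_zero.mpr hα.ne'
  have hε0 : (ε : ℂ) ≠ 0 := ofReal_ne_zero.mpr hε.ne'
  set X := ε ^ ((1 : ℝ) / 3)
  set w : ℂ := ((ε ^ ((2 : ℝ) / 3) / α : ℝ) : ℂ) * c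
  have hX : 0 < X := Real.rpow_pos_of_pos hε _
  have hw : 0 < w.re := by
    simp only [w, re_ofReal_mul]
    have := Real.rpow_pos_of_pos hε ((2 : ℝ) / 3)
    positivity
  have hXw : (X : ℂ) * w = ε / α * c := by
    have : X * (ε ^ ((2 : ℝ) / 3) / α) = ε / α := by
      rw [← mul_div_assoc, ← Real.rpow_add hε]
      norm_num
    rw [← mul_assoc, ← ofReal_mul, this, ofReal_div]
  have hb : 0 < ((X : ℂ) * w).re := by
    rw [re_ofReal_mul]
    positivity
  have hintegrand : ∀ p : ℝ,
      1 / ((ε : ℂ) * h + (√(α ^ 2 * p ^ 2 + t ^ 2 * ε ^ 2) : ℂ)) +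
        1 / ((ε : ℂ) * h - (√(α ^ 2 * p ^ 2 + t ^ 2 * ε ^ 2) : ℂ))
      = -(2 * (ε * h) / (α : ℂ) ^ 2) * (1 / ((p : ℂ) ^ 2 + (X * w) ^ 2)) := fun p => by
    have hsqrt := norm_ofReal_mul_lt_sqrt (α := α) hε hh p
    refine one_div_add_add_one_div_sub (add_ofReal_ne_zero_of_norm_lt hsqrt)
      (sub_ofReal_ne_zero_of_norm_lt hsqrt) ?_
    rw [← ofReal_pow, Real.sq_sqrt (by positivity), hXw]
    push_cast
    field_simp
    linear_combination -(ε : ℂ) ^ 2 * hc2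
  rw [intervalIntegral.integral_congr fun p _ => hintegrand p,
    intervalIntegral.integral_const_mul, integral_one_div_sq_add_sq hb,
    log_mul_add_I_sub_log_mul_sub_I hX hw, ← mul_assoc, hXw]
  have hc0 : c ≠ 0 := fun h0 => by simp [h0] at hc
  congr 1
  field_simp

theorem stmt_5_general (α t c₀ : ℝ) (hα : 0 < α) (ht : 0 < t) (hc₀' : c₀ < 1)
    (h : ℂ) (hh : ‖h‖ < c₀ * t) :
    Tendsto
      (fun ε : ℝ => (1 / (Real.pi : ℂ)) *
        ∫ p in (0:ℝ)..(ε ^ ((1:ℝ)/3)),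
          (1 / ((ε : ℂ) * h + (Real.sqrt (α ^ 2 * p ^ 2 + t ^ 2 * ε ^ 2) : ℂ)) +
           1 / ((ε : ℂ) * h - (Real.sqrt (α ^ 2 * p ^ 2 + t ^ 2 * ε ^ 2) : ℂ))))
      (nhdsWithin 0 (Set.Ioi 0))
      (nhds (-h / ((α : ℂ) * ((t : ℂ) ^ 2 - h ^ 2) ^ ((1:ℂ)/2)))) := by
  have hht : ‖h‖ < t := hh.trans (mul_lt_of_lt_one_left ht hc₀')
  have hre : 0 < ((t : ℂ) ^ 2 - h ^ 2).re := by
    have : (h ^ 2).re < t ^ 2 := (re_le_norm _).trans_lt (by rw [norm_pow]; gcongr)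
    simpa [← ofReal_pow] using this
  set c := ((t : ℂ) ^ 2 - h ^ 2) ^ ((1 : ℂ) / 2)
  have hc : 0 < c.re := re_cpow_one_half_pos hre
  have hw : Tendsto (fun ε : ℝ => ((ε ^ ((2 : ℝ) / 3) / α : ℝ) : ℂ) * c)
      (nhdsWithin 0 (Set.Ioi 0)) (nhds 0) := by
    have : ContinuousAt (fun ε : ℝ => ((ε ^ ((2 : ℝ) / 3) / α : ℝ) : ℂ) * c) 0 := by
      fun_prop (disch := norm_num)
    simpa using this.tendsto.mono_left nhdsWithin_le_nhds
  have hc0 : c ≠ 0 := fun h0 => by simp [h0] at hc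
  have hα0 : (α : ℂ) ≠ 0 := ofReal_ne_zero.mpr hα.ne'
  have hvalue : 1 / (Real.pi : ℂ) * (I * h / (α * c)) * (Real.pi * I) = -h / (α * c) := by
    field_simp
    linear_combination h * I_sq
  have hlim := ((tendsto_log_add_I_sub_log_sub_I.comp hw).const_mul
    (1 / (Real.pi : ℂ) * (I * h / (α * c))))
  rw [hvalue] at hlim
  refine hlim.congr' ?_
  filter_upwards [self_mem_nhdsWithin] with ε hε
  rw [integral_one_div_add_sqrt_add_one_div_sub_sqrt hα hε hht (sq_cpow_one_half _) hc,
    Function.comp_apply, mul_assoc]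

/-- The rescaled band integral near the Dirac point converges as `ε → 0⁺` to
`−h/(α √(t² − h²))` (principal branch), identifying the coefficient `β(h)`. -/
theorem stmt_5 (α t c₀ : ℝ) (hα : 0 < α) (ht : 0 < t) (hc₀ : 0 < c₀) (hc₀' : c₀ < 1)
    (h : ℂ) (hh : ‖h‖ < c₀ * t) :
    Tendsto
      (fun ε : ℝ => (1 / (Real.pi : ℂ)) *
        ∫ p in (0:ℝ)..(ε ^ ((1:ℝ)/3)),
          (1 / ((ε : ℂ) * h + (Real.sqrt (α ^ 2 * p ^ 2 + t ^ 2 * ε ^ 2) : ℂ)) +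
           1 / ((ε : ℂ) * h - (Real.sqrt (α ^ 2 * p ^ 2 + t ^ 2 * ε ^ 2) : ℂ))))
      (nhdsWithin 0 (Set.Ioi 0))
      (nhds (-h / ((α : ℂ) * ((t : ℂ) ^ 2 - h ^ 2) ^ ((1:ℂ)/2)))) :=
  stmt_5_general α t c₀ hα ht hc₀' h hh
end

section
/- Let H be a complex Hilbert space, let L : ℝ → (H →L[ℂ] H) and v : ℝ → H be differentiable at 0, and μ : ℝ → ℝ differentiable at 0, such that: L(p) is self-adjoint for every p, ‖v(p)‖ = 1 for every p, and L(p) v(p) = μ(p) • v(p) for every p. Then μ'(0) = re ⟨L'(0) v(0), v(0)⟩, where L'(0) denotes the derivative of L at 0 (and in fact ⟨L'(0)v(0), v(0)⟩ is real, so μ'(0) = ⟨L'(0) v(0), v(0)⟩). -/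
/-!
Since `‖v p‖ = 1`, the eigenvalue is the Rayleigh quotient `μ p = ⟪L p (v p), v p⟫`.
Differentiating it at `0` gives `⟪L v, v'⟫ + ⟪L' v, v⟫ + ⟪L v', v⟫`; by symmetry of `L 0` the two
terms containing `v'` add up to `μ 0 (⟪v, v'⟫ + ⟪v', v⟫)`, the derivative of `‖v p‖² = 1`
scaled by `μ 0`, which vanishes.
-/

section ScalarTower

variable {𝕜 𝕜' E F : Type*} [NontriviallyNormedField 𝕜] [NontriviallyNormedField 𝕜']
  [NormedAlgebra 𝕜 𝕜'] [NormedAddCommGroup E] [NormedSpace 𝕜 E] [NormedSpace 𝕜' E]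
  [IsScalarTower 𝕜 𝕜' E] [NormedAddCommGroup F] [NormedSpace 𝕜 F] [NormedSpace 𝕜' F]
  [IsScalarTower 𝕜 𝕜' F]

theorem HasDerivAt.clm_apply_of_isScalarTower {c : 𝕜 → E →L[𝕜'] F} {c' : E →L[𝕜'] F}
    {u : 𝕜 → E} {u' : E} {x : 𝕜} (hc : HasDerivAt c c' x) (hu : HasDerivAt u u' x) :
    HasDerivAt (fun y => c y (u y)) (c' (u x) + c x u') x := by
  have hc𝕜 : HasDerivAt (fun y => (c y).restrictScalars 𝕜) (c'.restrictScalars 𝕜) x :=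
    (ContinuousLinearMap.restrictScalarsL 𝕜' E F 𝕜 𝕜).hasFDerivAt.comp_hasDerivAt x hc
  exact hc𝕜.clm_apply hu

end ScalarTower

section InnerProduct

variable {𝕜 E : Type*} [RCLike 𝕜] [NormedAddCommGroup E] [InnerProductSpace 𝕜 E]

local notation "⟪" x ", " y "⟫" => inner 𝕜 x y

theorem HasDerivAt.inner_add_inner_eq_zero_of_norm_eq [NormedSpace ℝ E] {v : ℝ → E} {v' : E}
    {t c : ℝ} (hv : HasDerivAt v v' t) (hc : ∀ p, ‖v p‖ = c) : ⟪v t, v'⟫ + ⟪v', v t⟫ = 0 := by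
  have hconst : (fun p => ⟪v p, v p⟫) = fun _ => ((c ^ 2 : ℝ) : 𝕜) := by
    funext p
    rw [inner_self_eq_norm_sq_to_K, hc p, RCLike.ofReal_pow]
  have h := hv.inner 𝕜 hv
  rw [hconst] at h
  exact h.unique (hasDerivAt_const t _)

theorem eigenvalue_deriv_eq_inner [NormedSpace ℝ E] [IsScalarTower ℝ 𝕜 E]
    {L : ℝ → E →L[𝕜] E} {L' : E →L[𝕜] E} {v : ℝ → E} {v' : E} {μ : ℝ → ℝ} {μ' t : ℝ}
    (hL : HasDerivAt L L' t) (hv : HasDerivAt v v' t) (hμ : HasDerivAt μ μ' t)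
    (hsym : ∀ x y, ⟪L t x, y⟫ = ⟪x, L t y⟫) (hnorm : ∀ p, ‖v p‖ = 1)
    (heig : ∀ p, L p (v p) = (μ p : 𝕜) • v p) :
    (μ' : 𝕜) = ⟪L' (v t), v t⟫ := by
  have hRayleigh : (fun p => ⟪L p (v p), v p⟫) = fun p => (μ p : 𝕜) := by
    funext p
    rw [heig p, inner_smul_left, inner_self_eq_norm_sq_to_K, hnorm p]
    simp
  have h := (hL.clm_apply_of_isScalarTower hv).inner 𝕜 hv
  rw [hRayleigh] at h
  have hμ𝕜 : HasDerivAt (fun p => (μ p : 𝕜)) μ' t := by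
    simpa [Function.comp_def] using (RCLike.ofRealCLM (K := 𝕜)).hasFDerivAt.comp_hasDerivAt t hμ
  have htangent := hv.inner_add_inner_eq_zero_of_norm_eq (𝕜 := 𝕜) hnorm
  calc (μ' : 𝕜) = ⟪L t (v t), v'⟫ + ⟪L' (v t) + L t v', v t⟫ := hμ𝕜.unique h
    _ = (μ t : 𝕜) * (⟪v t, v'⟫ + ⟪v', v t⟫) + ⟪L' (v t), v t⟫ := by
      rw [inner_add_left, hsym v' (v t), heig, inner_smul_left, inner_smul_right,
        RCLike.conj_ofReal]
      ring
    _ = ⟪L' (v t), v t⟫ := by rw [htangent, mul_zero, zero_add]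

end InnerProduct

/-- Hellmann–Feynman theorem: for a differentiable family of symmetric operators `L(p)`
with normalized eigenvectors `v(p)` and eigenvalues `μ(p)`, one has
`μ'(0) = Re ⟨L'(0) v(0), v(0)⟩`, and this inner product is real. -/
theorem stmt_16 {H : Type*} [NormedAddCommGroup H] [InnerProductSpace ℂ H]
    (L : ℝ → (H →L[ℂ] H)) (v : ℝ → H) (μ : ℝ → ℝ)
    (L' : H →L[ℂ] H) (hL' : HasDerivAt L L' 0)
    (v' : H) (hv' : HasDerivAt v v' 0)
    (μ' : ℝ) (hμ' : HasDerivAt μ μ' 0)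
    (hsym : ∀ (p : ℝ) (x y : H), (inner ℂ ((L p) x) y : ℂ) = inner ℂ x ((L p) y))
    (hnorm : ∀ p : ℝ, ‖v p‖ = 1)
    (heig : ∀ p : ℝ, (L p) (v p) = (μ p : ℂ) • v p) :
    μ' = (inner ℂ (L' (v 0)) (v 0) : ℂ).re ∧ (inner ℂ (L' (v 0)) (v 0) : ℂ).im = 0 := by
  have h : (μ' : ℂ) = inner ℂ (L' (v 0)) (v 0) :=
    eigenvalue_deriv_eq_inner hL' hv' hμ' (hsym 0) hnorm heig
  rw [← h]
  exact ⟨(Complex.ofReal_re μ').symm, Complex.ofReal_im μ'⟩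
end
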